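/- In the restricted colored braid monoid B⁺r(n,C), the relation σ_{2,b}σ_{3,c}σ_{2,c}σ_{1,a}σ_{2,b}σ_{3,a} ≡ σ_{1,a}σ_{3,c}σ_{2,a}σ_{1,c}σ_{3,b}σ_{2,b} holds for all a, b, c in C. -/
import Mathlib


/-- The defining relations of the restricted positive colored braid monoid
`B⁺r(n,C)`: generators are pairs `(i,a) : Fin (n-1) × C` (the real index being
`i.val + 1`), with `σ_{i,a}σ_{j,b} = σ_{j,b}σ_{i,a}` for `|i-j| ≥ 2` and
`σ_{i,a}σ_{j,a}σ_{i,b} = σ_{j,b}σ_{i,a}σ_{j,a}` for `|i-j| = 1`. -/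
inductive RestrictedColoredBraidRel (n : ℕ) (C : Type) :
    FreeMonoid (Fin (n - 1) × C) → FreeMonoid (Fin (n - 1) × C) → Prop
  | comm (i j : Fin (n - 1)) (a b : C)
      (hij : i.val + 2 ≤ j.val ∨ j.val + 2 ≤ i.val) :
      RestrictedColoredBraidRel n C
        (FreeMonoid.of (i, a) * FreeMonoid.of (j, b))
        (FreeMonoid.of (j, b) * FreeMonoid.of (i, a))
  | braid (i j : Fin (n - 1)) (a b : C)
      (hij : i.val + 1 = j.val ∨ j.val + 1 = i.val) :
      RestrictedColoredBraidRel n C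
        (FreeMonoid.of (i, a) * FreeMonoid.of (j, a) * FreeMonoid.of (i, b))
        (FreeMonoid.of (j, b) * FreeMonoid.of (i, a) * FreeMonoid.of (j, a))

private lemma ctx {M : Type*} [Monoid M] {r : M → M → Prop} {s t : M} (u v : M)
    (h : ConGen.Rel r s t) : ConGen.Rel r (u * s * v) (u * t * v) :=
  ((ConGen.Rel.refl u).mul h).mul (ConGen.Rel.refl v)

/-- In the restricted colored braid monoid `B⁺r(n,C)` (`n ≥ 4`), the relation
`σ_{2,b}σ_{3,c}σ_{2,c}σ_{1,a}σ_{2,b}σ_{3,a} ≡ σ_{1,a}σ_{3,c}σ_{2,a}σ_{1,c}σ_{3,b}σ_{2,b}`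
holds for all `a, b, c` in `C`. -/
theorem stmt16 (n : ℕ) (hn : 4 ≤ n) (C : Type) (a b c : C) :
    conGen (RestrictedColoredBraidRel n C)
      (FreeMonoid.of (⟨1, by omega⟩, b) * FreeMonoid.of (⟨2, by omega⟩, c) *
        FreeMonoid.of (⟨1, by omega⟩, c) * FreeMonoid.of (⟨0, by omega⟩, a) *
        FreeMonoid.of (⟨1, by omega⟩, b) * FreeMonoid.of (⟨2, by omega⟩, a))
      (FreeMonoid.of (⟨0, by omega⟩, a) * FreeMonoid.of (⟨2, by omega⟩, c) *
        FreeMonoid.of (⟨1, by omega⟩, a) * FreeMonoid.of (⟨0, by omega⟩, c) *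
        FreeMonoid.of (⟨2, by omega⟩, b) * FreeMonoid.of (⟨1, by omega⟩, b)) := by
  set i0 : Fin (n - 1) := ⟨0, by omega⟩
  set i1 : Fin (n - 1) := ⟨1, by omega⟩
  set i2 : Fin (n - 1) := ⟨2, by omega⟩
  show ConGen.Rel (RestrictedColoredBraidRel n C) _ _
  have s1 : ConGen.Rel (RestrictedColoredBraidRel n C)
      (FreeMonoid.of (i1, b) * FreeMonoid.of (i2, c) * FreeMonoid.of (i1, c) *
        FreeMonoid.of (i0, a) * FreeMonoid.of (i1, b) * FreeMonoid.of (i2, a))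
      (FreeMonoid.of (i2, c) * FreeMonoid.of (i1, c) * FreeMonoid.of (i2, b) *
        FreeMonoid.of (i0, a) * FreeMonoid.of (i1, b) * FreeMonoid.of (i2, a)) := by
    exact ctx 1 (FreeMonoid.of (i0, a) * FreeMonoid.of (i1, b) * FreeMonoid.of (i2, a))
      (ConGen.Rel.symm (ConGen.Rel.of _ _ (RestrictedColoredBraidRel.braid i2 i1 c b (Or.inr rfl))))
  have s2 : ConGen.Rel (RestrictedColoredBraidRel n C)
      (FreeMonoid.of (i2, c) * FreeMonoid.of (i1, c) * FreeMonoid.of (i2, b) *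
        FreeMonoid.of (i0, a) * FreeMonoid.of (i1, b) * FreeMonoid.of (i2, a))
      (FreeMonoid.of (i2, c) * FreeMonoid.of (i1, c) * FreeMonoid.of (i0, a) *
        FreeMonoid.of (i2, b) * FreeMonoid.of (i1, b) * FreeMonoid.of (i2, a)) := by
    exact ctx (FreeMonoid.of (i2, c) * FreeMonoid.of (i1, c))
      (FreeMonoid.of (i1, b) * FreeMonoid.of (i2, a))
      (ConGen.Rel.of _ _ (RestrictedColoredBraidRel.comm i2 i0 b a (Or.inr (by simp [i0, i2]))))
  have s3 : ConGen.Rel (RestrictedColoredBraidRel n C)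
      (FreeMonoid.of (i2, c) * FreeMonoid.of (i1, c) * FreeMonoid.of (i0, a) *
        FreeMonoid.of (i2, b) * FreeMonoid.of (i1, b) * FreeMonoid.of (i2, a))
      (FreeMonoid.of (i2, c) * FreeMonoid.of (i1, c) * FreeMonoid.of (i0, a) *
        FreeMonoid.of (i1, a) * FreeMonoid.of (i2, b) * FreeMonoid.of (i1, b)) := by
    exact ctx (FreeMonoid.of (i2, c) * FreeMonoid.of (i1, c) * FreeMonoid.of (i0, a)) 1
      (ConGen.Rel.of _ _ (RestrictedColoredBraidRel.braid i2 i1 b a (Or.inr rfl)))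
  have s4 : ConGen.Rel (RestrictedColoredBraidRel n C)
      (FreeMonoid.of (i2, c) * FreeMonoid.of (i1, c) * FreeMonoid.of (i0, a) *
        FreeMonoid.of (i1, a) * FreeMonoid.of (i2, b) * FreeMonoid.of (i1, b))
      (FreeMonoid.of (i2, c) * FreeMonoid.of (i0, a) * FreeMonoid.of (i1, a) *
        FreeMonoid.of (i0, c) * FreeMonoid.of (i2, b) * FreeMonoid.of (i1, b)) := by
    exact ctx (FreeMonoid.of (i2, c)) (FreeMonoid.of (i2, b) * FreeMonoid.of (i1, b))
      (ConGen.Rel.symm (ConGen.Rel.of _ _ (RestrictedColoredBraidRel.braid i0 i1 a c (Or.inl rfl))))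
  have s5 : ConGen.Rel (RestrictedColoredBraidRel n C)
      (FreeMonoid.of (i2, c) * FreeMonoid.of (i0, a) * FreeMonoid.of (i1, a) *
        FreeMonoid.of (i0, c) * FreeMonoid.of (i2, b) * FreeMonoid.of (i1, b))
      (FreeMonoid.of (i0, a) * FreeMonoid.of (i2, c) * FreeMonoid.of (i1, a) *
        FreeMonoid.of (i0, c) * FreeMonoid.of (i2, b) * FreeMonoid.of (i1, b)) := by
    exact ctx 1 (FreeMonoid.of (i1, a) * FreeMonoid.of (i0, c) *
      FreeMonoid.of (i2, b) * FreeMonoid.of (i1, b))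
      (ConGen.Rel.of _ _ (RestrictedColoredBraidRel.comm i2 i0 c a (Or.inr (by simp [i0, i2]))))
  exact ((((s1.trans s2).trans s3).trans s4).trans s5)
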